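/- Let G be a nilpotent group such that every abelian subquotient of its lower central series is T-local (uniquely q-divisible for q ∉ T). Then for every prime q ∉ T, the q-th power map G → G, x ↦ x^q, is bijective. -/

import Mathlib

/-!
Along a descending central series `G = H 0 ≥ H 1 ≥ ⋯ ≥ H n = 1`, each `H i` is central modulo
`H (i + 1)`, so modulo `H (i + 1)` the `q`-th power map is multiplicative on products with a factor
from `H i`. Hence a solution of `x ^ q = g` modulo `H i` can be corrected by a factor from `H i` to a
solution modulo `H (i + 1)`, and `x ^ q = y ^ q` with `x * y⁻¹ ∈ H i` forces `(x * y⁻¹) ^ q` and thus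
`x * y⁻¹` into `H (i + 1)`. After `n` steps this gives bijectivity.
-/

open scoped commutatorElement

section CentralModulo

variable {G : Type*} [Group G] {N K : Subgroup G} [N.Normal]

theorem QuotientGroup.commute_mk_of_commutatorElement_mem {y g : G} (h : ⁅y, g⁆ ∈ N) :
    Commute (y : G ⧸ N) g := by
  rw [← commutatorElement_eq_one_iff_commute]
  exact (map_commutatorElement (QuotientGroup.mk' N) y g).symm.trans
    ((QuotientGroup.eq_one_iff _).mpr h)

variable (hK : ∀ y ∈ K, ∀ g, ⁅y, g⁆ ∈ N) {q : ℕ}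
include hK

theorem mul_inv_mem_of_pow_eq_pow_of_central
    (hroot : ∀ z ∈ K, z ^ q ∈ N → z ∈ N) {x y : G} (hxy : x * y⁻¹ ∈ K) (hpow : x ^ q = y ^ q) :
    x * y⁻¹ ∈ N := by
  refine hroot _ hxy ?_
  have hmul : ((x * y⁻¹ * y : G) : G ⧸ N) ^ q = ((x * y⁻¹) ^ q : G) * (y : G ⧸ N) ^ q := by
    rw [QuotientGroup.mk_mul,
      (QuotientGroup.commute_mk_of_commutatorElement_mem (hK _ hxy y)).mul_pow,
      QuotientGroup.mk_pow]
  rw [inv_mul_cancel_right, ← QuotientGroup.mk_pow, hpow, QuotientGroup.mk_pow] at hmul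
  rw [← QuotientGroup.eq_one_iff]
  exact mul_eq_right.mp hmul.symm

theorem exists_pow_mul_inv_mem_of_central
    (hroot : ∀ z ∈ K, ∃ y ∈ K, y ^ q * z⁻¹ ∈ N) {g x : G} (hx : x ^ q * g⁻¹ ∈ K) :
    ∃ x' : G, x' ^ q * g⁻¹ ∈ N := by
  obtain ⟨y, hyK, hy⟩ := hroot _ (inv_mem hx)
  have hcomm := QuotientGroup.commute_mk_of_commutatorElement_mem (hK _ hyK x)
  refine ⟨x * y, ?_⟩
  rw [inv_inv, ← QuotientGroup.eq_one_iff] at hy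
  rw [← QuotientGroup.eq_one_iff]
  calc (((x * y) ^ q * g⁻¹ : G) : G ⧸ N)
      = (x : G ⧸ N) ^ q * (y : G ⧸ N) ^ q * (g⁻¹ : G) := by
        rw [QuotientGroup.mk_mul, QuotientGroup.mk_pow, QuotientGroup.mk_mul, hcomm.symm.mul_pow]
    _ = (((y ^ q * (x ^ q * g⁻¹)) : G) : G ⧸ N) := by
        rw [(hcomm.symm.pow_pow q q).eq, mul_assoc]
        simp only [QuotientGroup.mk_mul, QuotientGroup.mk_pow]
    _ = 1 := hy

end CentralModulo

theorem Subgroup.IsDescendingCentralSeries.pow_bijective {G : Type*} [Group G]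
    {H : ℕ → Subgroup G} [∀ i, (H i).Normal] (hH : IsDescendingCentralSeries H) {n : ℕ} (hn : H n = ⊥) {q : ℕ}
    (hsurj : ∀ i, ∀ z ∈ H i, ∃ y ∈ H i, y ^ q * z⁻¹ ∈ H (i + 1))
    (hinj : ∀ i, ∀ z ∈ H i, z ^ q ∈ H (i + 1) → z ∈ H (i + 1)) :
    Function.Bijective (fun x : G => x ^ q) := by
  have hcentral (i : ℕ) : ∀ y ∈ H i, ∀ g, ⁅y, g⁆ ∈ H (i + 1) := fun y hy => hH.2 y i hy
  constructor
  · intro x y hpow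
    have hmem (i : ℕ) : x * y⁻¹ ∈ H i := by
      induction i with
      | zero => exact hH.1 ▸ Subgroup.mem_top _
      | succ i ih => exact mul_inv_mem_of_pow_eq_pow_of_central (hcentral i) (hinj i) ih hpow
    simpa [hn, mul_inv_eq_one] using hmem n
  · intro g
    have hmem (i : ℕ) : ∃ x : G, x ^ q * g⁻¹ ∈ H i := by
      induction i with
      | zero => exact ⟨1, hH.1 ▸ Subgroup.mem_top _⟩
      | succ i ih =>
        obtain ⟨x, hx⟩ := ih
        exact exists_pow_mul_inv_mem_of_central (hcentral i) (hsurj i) hx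
    obtain ⟨x, hx⟩ := hmem n
    exact ⟨x, by simpa [hn, mul_inv_eq_one] using hx⟩

/-- if `G` is a nilpotent group such that each quotient
`Γᵢ/Γᵢ₊₁` of its lower central series is `T`-local (for every prime `q ∉ T` the `q`-th power
map is bijective modulo `Γᵢ₊₁`), then for every prime `q ∉ T` the `q`-th power map on `G`
is bijective. -/
theorem stmt10 (T : Set ℕ) {G : Type} [Group G] [Group.IsNilpotent G]
    (hlocal : ∀ i : ℕ, ∀ q : ℕ, q.Prime → q ∉ T →
      (∀ x ∈ (⊤ : Subgroup G).lowerCentralSeries i, ∃ y ∈ (⊤ : Subgroup G).lowerCentralSeries i,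
          y ^ q * x⁻¹ ∈ (⊤ : Subgroup G).lowerCentralSeries (i + 1)) ∧
      (∀ y ∈ (⊤ : Subgroup G).lowerCentralSeries i, y ^ q ∈ (⊤ : Subgroup G).lowerCentralSeries (i + 1) →
          y ∈ (⊤ : Subgroup G).lowerCentralSeries (i + 1))) :
    ∀ q : ℕ, q.Prime → q ∉ T → Function.Bijective (fun x : G => x ^ q) := by
  intro q hq hqT
  obtain ⟨n, hn⟩ := Subgroup.nilpotent_iff_lowerCentralSeries.mp ‹Group.IsNilpotent G›
  exact Subgroup.IsDescendingCentralSeries.pow_bijective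
    Subgroup.lowerCentralSeries_isDescendingCentralSeries hn
    (fun i => (hlocal i q hq hqT).1) (fun i => (hlocal i q hq hqT).2)
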